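/- Let Σ = {a,b,c} and let A_{//a//b} be the TDSTA over Σ with states Q = {q₀,q₁}, top states 𝒯 = {q₀}, bottom states ℬ = {q₀,q₁}, selecting configurations 𝒮 = {(q₁,b)}, and transitions (q₀,{a},q₁,q₀), (q₀,{b,c},q₀,q₀), (q₁,{a,b,c},q₁,q₁). Then there is no bottom-up deterministic selecting tree automaton (BDSTA) B over Σ with B ≡ A_{//a//b}. -/

import Mathlib

/-- Binary trees over an alphabet `σ`: `leaf` is the leaf symbol `#`. -/
inductive BTree (σ : Type) : Type where
  | leaf : BTree σ
  | node : σ → BTree σ → BTree σ → BTree σ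

namespace BTree

/-- `mem π t` : the node `π` (a sequence over `{1,2}`, here `Bool` with
`false` = first child, `true` = second child) belongs to `dom t`. -/
def mem {σ : Type} : List Bool → BTree σ → Prop
  | [], _ => True
  | _ :: _, .leaf => False
  | false :: π, .node _ t1 _ => mem π t1
  | true :: π, .node _ _ t2 => mem π t2

/-- The label of `t` at node `π`: `some l` if `t(π) = l ∈ σ`,
and `none` if `t(π) = #` or `π ∉ dom t`. -/
def labelAt {σ : Type} : BTree σ → List Bool → Option σ
  | .leaf, _ => none
  | .node l _ _, [] => some l
  | .node _ t1 _, false :: π => labelAt t1 π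
  | .node _ _ t2, true :: π => labelAt t2 π

end BTree

/-- A selecting tree automaton (STA) over alphabet `σ` with states `Q`:
top states, bottom states, selecting configurations and transitions
`(q, L, q₁, q₂)` with `L ⊆ σ`. -/
structure STA (σ Q : Type) where
  top : Set Q
  bot : Set Q
  sel : Set (Q × σ)
  delta : Set (Q × Set σ × Q × Q)

namespace STA

variable {σ Q : Type}

/-- Destination states: `δ(q,l) = {(q',q'') | ∃ L, l ∈ L ∧ (q,L,q',q'') ∈ δ}`. -/
def dst (A : STA σ Q) (q : Q) (l : σ) : Set (Q × Q) :=
  {p | ∃ L, l ∈ L ∧ (q, L, p.1, p.2) ∈ A.delta}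

/-- Source states: `δ(q₁,q₂,l) = {q | ∃ L, l ∈ L ∧ (q,L,q₁,q₂) ∈ δ}`. -/
def src (A : STA σ Q) (q1 q2 : Q) (l : σ) : Set Q :=
  {q | ∃ L, l ∈ L ∧ (q, L, q1, q2) ∈ A.delta}

/-- `R` is a run of `A` over `t`. -/
def IsRun (A : STA σ Q) (t : BTree σ) (R : List Bool → Q) : Prop :=
  ∀ π l, t.labelAt π = some l →
    R π ∈ A.src (R (π ++ [false])) (R (π ++ [true])) l

/-- `R` is an accepting run of `A` over `t`. -/
def Accepting (A : STA σ Q) (t : BTree σ) (R : List Bool → Q) : Prop :=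
  A.IsRun t R ∧ R [] ∈ A.top ∧
    ∀ π, BTree.mem π t → t.labelAt π = none → R π ∈ A.bot

/-- The language of `A`. -/
def lang (A : STA σ Q) : Set (BTree σ) := {t | ∃ R, A.Accepting t R}

/-- The set of nodes of `t` selected by `A`. -/
def selected (A : STA σ Q) (t : BTree σ) : Set (List Bool) :=
  {π | ∃ R l, A.Accepting t R ∧ t.labelAt π = some l ∧ (R π, l) ∈ A.sel}

/-- `A` is top-down deterministic. -/
def TDDet (A : STA σ Q) : Prop :=
  (∃ q, A.top = {q}) ∧ ∀ q l, ∃ p, A.dst q l = {p}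

/-- `A` is bottom-up deterministic. -/
def BUDet (A : STA σ Q) : Prop :=
  (∃ q, A.bot = {q}) ∧ ∀ q1 q2 l, ∃ q, A.src q1 q2 l = {q}

/-- `A` is top-down complete. -/
def TDComplete (A : STA σ Q) : Prop := ∀ q l, (A.dst q l).Nonempty

/-- `A` is bottom-up complete. -/
def BUComplete (A : STA σ Q) : Prop := ∀ q1 q2 l, (A.src q1 q2 l).Nonempty

/-- One-step reachability between states. -/
def step (A : STA σ Q) (p p' : Q) : Prop :=
  ∃ L q1 q2, (p, L, q1, q2) ∈ A.delta ∧ (p' = q1 ∨ p' = q2)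

/-- Reachability between states. -/
def reach (A : STA σ Q) : Q → Q → Prop := Relation.ReflTransGen A.step

/-- `A[q]` : the restriction of `A` to the state `q`
(top states become `{q}` and everything is restricted to states reachable from `q`). -/
def restrict (A : STA σ Q) (q : Q) : STA σ Q where
  top := {q}
  bot := {p | p ∈ A.bot ∧ A.reach q p}
  sel := {ps | ps ∈ A.sel ∧ A.reach q ps.1}
  delta := {tr | tr ∈ A.delta ∧ A.reach q tr.1}

/-- A state is non-changing if `δ(q,l) = {(q,q)}` for every label. -/
def NonChanging (A : STA σ Q) (q : Q) : Prop := ∀ l, A.dst q l = {(q, q)}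

/-- Top-down universal state. -/
def TDUniversal (A : STA σ Q) (q : Q) : Prop := A.NonChanging q ∧ q ∈ A.bot

/-- Top-down sink state. -/
def TDSink (A : STA σ Q) (q : Q) : Prop := A.NonChanging q ∧ q ∉ A.bot

end STA

/-- Equivalence of STAs: same language and same selected nodes on every tree. -/
def STAEquiv {σ Q Q' : Type} (A : STA σ Q) (B : STA σ Q') : Prop :=
  A.lang = B.lang ∧ ∀ t, A.selected t = B.selected t

/-- `A` is a minimal top-down complete TDSTA: no equivalent top-down complete
TDSTA has strictly fewer states. -/
def MinimalTD {σ Q : Type} (A : STA σ Q) : Prop :=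
  A.TDDet ∧ A.TDComplete ∧
    ∀ (Q' : Type) [Finite Q'], ∀ B : STA σ Q',
      B.TDDet → B.TDComplete → STAEquiv B A → Nat.card Q ≤ Nat.card Q'

/-- `A` is a minimal bottom-up complete BDSTA. -/
def MinimalBU {σ Q : Type} (A : STA σ Q) : Prop :=
  A.BUDet ∧ A.BUComplete ∧
    ∀ (Q' : Type) [Finite Q'], ∀ B : STA σ Q',
      B.BUDet → B.BUComplete → STAEquiv B A → Nat.card Q ≤ Nat.card Q'

/-- `B` behaves like `A_⊤`: it accepts every tree and selects no node. -/
def IsTopSTA {σ Q : Type} (B : STA σ Q) : Prop :=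
  B.lang = Set.univ ∧ ∀ t, B.selected t = ∅

/-- The three-letter alphabet `Σ = {a, b, c}`. -/
inductive ABC : Type where
  | a | b | c
deriving DecidableEq

instance : Fintype ABC where
  elems := {ABC.a, ABC.b, ABC.c}
  complete := by
    intro x
    cases x <;> simp

/-- The TDSTA `A_{//a//b}` (states `q₀ = false`, `q₁ = true`). -/
def Aab : STA ABC Bool where
  top := {false}
  bot := Set.univ
  sel := {(true, ABC.b)}
  delta := {(false, ({ABC.a} : Set ABC), true, false),
            (false, ({ABC.b, ABC.c} : Set ABC), false, false),
            (true, (Set.univ : Set ABC), true, true)}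

/-!
A bottom-up deterministic automaton assigns to every node of a tree a state that depends
only on the subtree rooted there, so for accepted trees whether a node is selected depends
only on that subtree. But `A_{//a//b}` accepts both `a(b(#,#),#)` and `b(b(#,#),#)` and
selects the `b`-child in the first tree only, although the subtrees at that node coincide.
-/

namespace BTree

variable {σ : Type}

/-- The subtree rooted at `π`; it is `#` when `π ∉ dom t`. -/
def subtree : BTree σ → List Bool → BTree σ
  | .leaf, _ => .leaf
  | .node l t₁ t₂, [] => .node l t₁ t₂
  | .node _ t₁ _, false :: π => subtree t₁ π
  | .node _ _ t₂, true :: π => subtree t₂ π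

theorem labelAt_subtree (t : BTree σ) (π ρ : List Bool) :
    (t.subtree π).labelAt ρ = t.labelAt (π ++ ρ) := by
  induction π generalizing t with
  | nil => cases t <;> rfl
  | cons b π ih =>
    cases t with
    | leaf => rfl
    | node l t₁ t₂ => cases b <;> exact ih _

theorem mem_append_iff {t : BTree σ} {π ρ : List Bool} :
    mem (π ++ ρ) t ↔ mem π t ∧ mem ρ (t.subtree π) := by
  induction π generalizing t with
  | nil => cases t <;> simp [mem, subtree]
  | cons b π ih =>
    cases t with
    | leaf => simp [mem]
    | node l t₁ t₂ => cases b <;> exact ih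

theorem mem_of_labelAt_eq_some {t : BTree σ} {π : List Bool} {l : σ}
    (h : t.labelAt π = some l) : mem π t := by
  induction π generalizing t with
  | nil => trivial
  | cons b π ih =>
    cases t with
    | leaf => cases h
    | node l' t₁ t₂ => cases b <;> exact ih h

end BTree

namespace STA

variable {σ Q : Type}

theorem isRun_leaf (A : STA σ Q) (R : List Bool → Q) : A.IsRun .leaf R :=
  fun _ _ h => by cases h

theorem isRun_node_iff {A : STA σ Q} {l : σ} {t₁ t₂ : BTree σ} {R : List Bool → Q} :
    A.IsRun (.node l t₁ t₂) R ↔ R [] ∈ A.src (R [false]) (R [true]) l ∧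
      A.IsRun t₁ (fun π => R (false :: π)) ∧ A.IsRun t₂ (fun π => R (true :: π)) := by
  refine ⟨fun h => ⟨h [] l rfl, fun π l' h' => h (false :: π) l' h',
    fun π l' h' => h (true :: π) l' h'⟩, ?_⟩
  rintro ⟨hroot, h₁, h₂⟩ π l' h
  match π with
  | [] => cases h; exact hroot
  | false :: π => exact h₁ π l' h
  | true :: π => exact h₂ π l' h

def IsBottomRun (A : STA σ Q) (t : BTree σ) (R : List Bool → Q) : Prop :=
  A.IsRun t R ∧ ∀ π, BTree.mem π t → t.labelAt π = none → R π ∈ A.bot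

theorem Accepting.isBottomRun_subtree {A : STA σ Q} {t : BTree σ} {R : List Bool → Q}
    (hR : A.Accepting t R) {π : List Bool} (hπ : BTree.mem π t) :
    A.IsBottomRun (t.subtree π) (fun ρ => R (π ++ ρ)) := by
  refine ⟨fun ρ l h => ?_, fun ρ hρ h => ?_⟩
  · rw [t.labelAt_subtree] at h
    simpa only [List.append_assoc] using hR.1 (π ++ ρ) l h
  · rw [t.labelAt_subtree] at h
    exact hR.2.2 (π ++ ρ) (BTree.mem_append_iff.2 ⟨hπ, hρ⟩) h

theorem BUDet.eq_of_isBottomRun {B : STA σ Q} (hB : B.BUDet) {t : BTree σ}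
    {R R' : List Bool → Q} (hR : B.IsBottomRun t R) (hR' : B.IsBottomRun t R') :
    R [] = R' [] := by
  obtain ⟨⟨qb, hbot⟩, hdet⟩ := hB
  induction t generalizing R R' with
  | leaf =>
    have hq := hR.2 [] trivial rfl
    have hq' := hR'.2 [] trivial rfl
    rw [hbot] at hq hq'
    exact hq.trans hq'.symm
  | node l t₁ t₂ ih₁ ih₂ =>
    obtain ⟨hq, hR₁, hR₂⟩ := isRun_node_iff.1 hR.1
    obtain ⟨hq', hR₁', hR₂'⟩ := isRun_node_iff.1 hR'.1
    have h₁ : R [false] = R' [false] :=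
      ih₁ ⟨hR₁, fun π => hR.2 (false :: π)⟩ ⟨hR₁', fun π => hR'.2 (false :: π)⟩
    have h₂ : R [true] = R' [true] :=
      ih₂ ⟨hR₂, fun π => hR.2 (true :: π)⟩ ⟨hR₂', fun π => hR'.2 (true :: π)⟩
    obtain ⟨q, hsrc⟩ := hdet (R' [false]) (R' [true]) l
    rw [h₁, h₂, hsrc] at hq
    rw [hsrc] at hq'
    exact hq.trans hq'.symm

theorem BUDet.mem_selected_of_subtree_eq {B : STA σ Q} (hB : B.BUDet) {t t' : BTree σ}
    {π π' : List Bool} (hπ : π ∈ B.selected t) (ht' : t' ∈ B.lang)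
    (h : t.subtree π = t'.subtree π') : π' ∈ B.selected t' := by
  obtain ⟨R, l, hR, hl, hsel⟩ := hπ
  obtain ⟨R', hR'⟩ := ht'
  have hl' : t'.labelAt π' = some l := by
    rw [← List.append_nil π', ← t'.labelAt_subtree, ← h, t.labelAt_subtree, List.append_nil, hl]
  have hrun := hR.isBottomRun_subtree (BTree.mem_of_labelAt_eq_some hl)
  have hrun' := hR'.isBottomRun_subtree (BTree.mem_of_labelAt_eq_some hl')
  rw [h] at hrun
  have hstate : R π = R' π' := by
    simpa only [List.append_nil] using hB.eq_of_isBottomRun hrun hrun'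
  exact ⟨R', l, hR', hl', hstate ▸ hsel⟩

end STA

namespace Aab

theorem mem_selected_b_below_a :
    [false] ∈ Aab.selected (.node .a (.node .b .leaf .leaf) .leaf) := by
  refine ⟨fun π => π.head? = some false, .b, ⟨?_, rfl, fun _ _ _ => trivial⟩, rfl, rfl⟩
  simp [STA.isRun_node_iff, STA.isRun_leaf, STA.src, Aab]

theorem b_b_mem_lang : .node .b (.node .b .leaf .leaf) .leaf ∈ Aab.lang := by
  refine ⟨fun _ => false, ?_, rfl, fun _ _ _ => trivial⟩
  simp [STA.isRun_node_iff, STA.isRun_leaf, STA.src, Aab]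

theorem not_mem_selected_below_b (t₁ t₂ : BTree ABC) :
    [false] ∉ Aab.selected (.node .b t₁ t₂) := by
  rintro ⟨R, l, ⟨hrun, htop, -⟩, -, hsel⟩
  have hroot := (STA.isRun_node_iff.1 hrun).1
  simp only [Aab, Set.mem_singleton_iff, Prod.mk.injEq] at htop hsel
  simp [STA.src, Aab, htop, hsel] at hroot

end Aab

/-- no BDSTA is equivalent to `A_{//a//b}`. -/
theorem stmt2 :
    ∀ (Q' : Type) [Finite Q'], ∀ B : STA ABC Q', B.BUDet → ¬ STAEquiv B Aab := by
  rintro Q' - B hB ⟨hlang, hsel⟩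
  have hselected : [false] ∈ B.selected (.node .a (.node .b .leaf .leaf) .leaf) := by
    rw [hsel]; exact Aab.mem_selected_b_below_a
  have haccepted : .node .b (.node .b .leaf .leaf) .leaf ∈ B.lang := by
    rw [hlang]; exact Aab.b_b_mem_lang
  have hselected' := hB.mem_selected_of_subtree_eq hselected haccepted (π' := [false]) rfl
  rw [hsel] at hselected'
  exact Aab.not_mem_selected_below_b _ _ hselected'
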